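/- arXiv:1409.0381 — 8 statements merged into one kernel-verified Lean document; each statement's English description precedes it below -/
import Mathlib

section
/- Let P, u : U → E be smooth maps on an open set U ⊆ ℝ × ℝ with ‖u k‖ = 1 for all k ∈ U, and let t : U → ℝ be smooth. Then for every k ∈ U, ⟪D₁(k ↦ P k + t k • u k)(k), D₂ u k⟫ − ⟪D₂(k ↦ P k + t k • u k)(k), D₁ u k⟫ = ⟪D₁ P k, D₂ u k⟫ − ⟪D₂ P k, D₁ u k⟫. In other words, the Lagrangian (isotropy) expression of a rank-2 family of oriented lines does not depend on the choice of the reference point P k on each line. -/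
open RealInnerProductSpace

noncomputable section

/-- The Euclidean affine space in which light propagates. -/
abbrev E : Type := EuclideanSpace ℝ (Fin 3)

/-- Partial derivative in the first coordinate direction of `ℝ × ℝ`. -/
def D1 {F : Type*} [NormedAddCommGroup F] [NormedSpace ℝ F] (f : ℝ × ℝ → F) (k : ℝ × ℝ) : F :=
  fderiv ℝ f k (1, 0)

/-- Partial derivative in the second coordinate direction of `ℝ × ℝ`. -/
def D2 {F : Type*} [NormedAddCommGroup F] [NormedSpace ℝ F] (f : ℝ × ℝ → F) (k : ℝ × ℝ) : F :=
  fderiv ℝ f k (0, 1)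

theorem independence_of_reference_point
    (U : Set (ℝ × ℝ)) (hU : IsOpen U)
    (P u : ℝ × ℝ → E) (t : ℝ × ℝ → ℝ)
    (hP : ContDiffOn ℝ (⊤ : ℕ∞) P U) (hu : ContDiffOn ℝ (⊤ : ℕ∞) u U)
    (ht : ContDiffOn ℝ (⊤ : ℕ∞) t U)
    (hunit : ∀ k ∈ U, ‖u k‖ = 1) :
    ∀ k ∈ U,
      ⟪D1 (fun k => P k + t k • u k) k, D2 u k⟫ - ⟪D2 (fun k => P k + t k • u k) k, D1 u k⟫ =
      ⟪D1 P k, D2 u k⟫ - ⟪D2 P k, D1 u k⟫ := by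
  intro k hk
  have hkn : U ∈ nhds k := hU.mem_nhds hk
  have hPd : DifferentiableAt ℝ P k :=
    (hP.differentiableOn (by norm_num)).differentiableAt hkn
  have hud : DifferentiableAt ℝ u k :=
    (hu.differentiableOn (by norm_num)).differentiableAt hkn
  have htd : DifferentiableAt ℝ t k :=
    (ht.differentiableOn (by norm_num)).differentiableAt hkn
  -- derivative of the combination
  have hcomb : HasFDerivAt (fun k => P k + t k • u k)
      (fderiv ℝ P k + (t k • fderiv ℝ u k + (fderiv ℝ t k).smulRight (u k))) k :=
    hPd.hasFDerivAt.add (htd.hasFDerivAt.smul hud.hasFDerivAt)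
  -- orthogonality: ⟪u k, fderiv u k v⟫ = 0
  have horth : ∀ v : ℝ × ℝ, ⟪u k, fderiv ℝ u k v⟫ = 0 := by
    intro v
    have hinner : HasFDerivAt (fun x => ⟪u x, u x⟫)
        ((fderivInnerCLM ℝ (u k, u k)).comp ((fderiv ℝ u k).prod (fderiv ℝ u k))) k :=
      hud.hasFDerivAt.inner ℝ hud.hasFDerivAt
    have hconst : (fun x => (⟪u x, u x⟫ : ℝ)) =ᶠ[nhds k] fun _ => (1 : ℝ) := by
      filter_upwards [hkn] with x hx
      rw [real_inner_self_eq_norm_sq, hunit x hx]; norm_num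
    have h0 : HasFDerivAt (fun x => (⟪u x, u x⟫ : ℝ)) (0 : (ℝ × ℝ) →L[ℝ] ℝ) k :=
      (hasFDerivAt_const (1 : ℝ) k).congr_of_eventuallyEq hconst
    have := hinner.unique h0
    have h2 : ((fderivInnerCLM ℝ (u k, u k)).comp
        ((fderiv ℝ u k).prod (fderiv ℝ u k))) v = 0 := by rw [this]; rfl
    simp only [ContinuousLinearMap.comp_apply, ContinuousLinearMap.prod_apply,
      fderivInnerCLM_apply] at h2
    have : ⟪u k, fderiv ℝ u k v⟫ + ⟪u k, fderiv ℝ u k v⟫ = 0 := by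
      rw [real_inner_comm (fderiv ℝ u k v) (u k)] at h2 ⊢
      linarith [h2]
    linarith [this]
  have hD1 : D1 (fun k => P k + t k • u k) k
      = fderiv ℝ P k (1, 0) + fderiv ℝ t k (1, 0) • u k + t k • fderiv ℝ u k (1, 0) := by
    rw [D1, hcomb.fderiv]; simp [add_assoc]; abel
  have hD2 : D2 (fun k => P k + t k • u k) k
      = fderiv ℝ P k (0, 1) + fderiv ℝ t k (0, 1) • u k + t k • fderiv ℝ u k (0, 1) := by
    rw [D2, hcomb.fderiv]; simp [add_assoc]; abel
  simp only [D1, D2] at *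
  rw [hD1, hD2]
  simp only [inner_add_left, real_inner_smul_left]
  rw [horth (1,0), horth (0,1),
    real_inner_comm (fderiv ℝ u k (0,1)) (fderiv ℝ u k (1,0))]
  ring
end
end

section
/- Let U ⊆ ℝ × ℝ be open and convex, and let P, u : U → E be smooth with ‖u k‖ = 1 for all k ∈ U. Then the family (P, u) is normal if and only if ⟪D₁ P k, D₂ u k⟫ = ⟪D₂ P k, D₁ u k⟫ for all k ∈ U. In other words, a rank-2 family of oriented lines is normal if and only if it is isotropic (Lagrangian) for the symplectic form dP ∧ du. -/
open RealInnerProductSpace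

noncomputable section

/-- A rank-2 family of oriented lines `(P, u)` is *normal* if there is a smooth
function `lam` such that the surface `k ↦ P k + lam k • u k` is orthogonal to all
the lines of the family. -/
def IsNormal (U : Set (ℝ × ℝ)) (P u : ℝ × ℝ → E) : Prop :=
  ∃ lam : ℝ × ℝ → ℝ, ContDiffOn ℝ (⊤ : ℕ∞) lam U ∧
    ∀ k ∈ U, ⟪u k, D1 (fun k => P k + lam k • u k) k⟫ = 0 ∧
             ⟪u k, D2 (fun k => P k + lam k • u k) k⟫ = 0

/-!
Since `‖u‖ = 1` forces `⟪u, du⟫ = 0`, one has `⟪u, d(P + λ • u)⟫ = ⟪u, dP⟫ + dλ`, so the heights `λ`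
witnessing normality are exactly the smooth primitives of the 1-form `heightForm P u = -⟪u, dP⟫`.
On a convex open set such a primitive exists iff the form is closed, i.e. its derivative
`-(⟪du v, dP w⟫ + ⟪u, d²P v w⟫)` is symmetric in `v, w` (Poincaré lemma one way, symmetry of the
second derivative of `λ` the other). As `d²P` is symmetric, closedness means that `⟪du v, dP w⟫` is
symmetric, which on `ℝ × ℝ` is the single equation `⟪D₁ P, D₂ u⟫ = ⟪D₂ P, D₁ u⟫`.
-/

open Topology
open scoped ContDiff

theorem Convex.exists_contDiffOn_hasFDerivAt_of_fderiv_symmetric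
    {F G : Type*} [NormedAddCommGroup F] [NormedSpace ℝ F]
    [NormedAddCommGroup G] [NormedSpace ℝ G] [CompleteSpace G]
    {U : Set F} (hconv : Convex ℝ U) (hU : IsOpen U) {θ : F → F →L[ℝ] G} {n : ℕ∞} (hn : n ≠ 0)
    (hθ : ContDiffOn ℝ n θ U) (hsymm : ∀ k ∈ U, ∀ v w, fderiv ℝ θ k v w = fderiv ℝ θ k w v) :
    ∃ lam : F → G, ContDiffOn ℝ (n + 1) lam U ∧ ∀ k ∈ U, HasFDerivAt lam (θ k) k := by
  obtain ⟨lam, hlam⟩ := hconv.exists_forall_hasFDerivAt_of_fderiv_symmetric hU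
    (hθ.differentiableOn (mod_cast hn)) hsymm
  refine ⟨lam, ?_, hlam⟩
  rw [contDiffOn_succ_iff_fderiv_of_isOpen hU]
  exact ⟨fun k hk => (hlam k hk).differentiableAt.differentiableWithinAt, by simp,
    hθ.congr fun k hk => (hlam k hk).fderiv⟩

theorem ContinuousLinearMap.apply_eq_fst_smul_add_snd_smul {G : Type*} [NormedAddCommGroup G]
    [NormedSpace ℝ G] (A : ℝ × ℝ →L[ℝ] G) (v : ℝ × ℝ) :
    A v = v.1 • A (1, 0) + v.2 • A (0, 1) := by
  rw [← map_smul, ← map_smul, ← map_add]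
  simp

section Lines

variable {F V : Type*} [NormedAddCommGroup F] [NormedSpace ℝ F]
  [NormedAddCommGroup V] [InnerProductSpace ℝ V]

theorem inner_fderiv_eq_zero_of_norm_eventually_const {u : F → V} {k : F} {c : ℝ}
    (hu : DifferentiableAt ℝ u k) (hc : ∀ᶠ x in 𝓝 k, ‖u x‖ = c) (v : F) :
    ⟪u k, fderiv ℝ u k v⟫ = 0 := by
  have hconst : HasFDerivAt (fun x => ‖u x‖ ^ 2) (0 : F →L[ℝ] ℝ) k :=
    (hasFDerivAt_const (c ^ 2) k).congr_of_eventuallyEq (hc.mono fun x hx => by simp only [hx])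
  simpa using congrArg (· v) (hu.hasFDerivAt.norm_sq.unique hconst)

theorem inner_fderiv_add_smul {P u : F → V} {lam : F → ℝ} {k : F}
    (hP : DifferentiableAt ℝ P k) (hu : DifferentiableAt ℝ u k) (hlam : DifferentiableAt ℝ lam k)
    (hunit : ∀ᶠ x in 𝓝 k, ‖u x‖ = 1) (v : F) :
    ⟪u k, fderiv ℝ (fun x => P x + lam x • u x) k v⟫ =
      ⟪u k, fderiv ℝ P k v⟫ + fderiv ℝ lam k v := by
  have h : HasFDerivAt (fun x => P x + lam x • u x) _ k :=
    hP.hasFDerivAt.add (hlam.hasFDerivAt.smul hu.hasFDerivAt)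
  rw [h.fderiv]
  simp [inner_add_right, real_inner_smul_right,
    inner_fderiv_eq_zero_of_norm_eventually_const hu hunit, hunit.self_of_nhds]

def heightForm (P u : F → V) (k : F) : F →L[ℝ] ℝ :=
  -(innerSL ℝ (u k)).comp (fderiv ℝ P k)

theorem heightForm_apply (P u : F → V) (k v : F) :
    heightForm P u k v = -⟪u k, fderiv ℝ P k v⟫ := rfl

theorem ContDiffOn.heightForm {P u : F → V} {U : Set F} (hU : IsOpen U) {n : WithTop ℕ∞}
    (hP : ContDiffOn ℝ (n + 1) P U) (hu : ContDiffOn ℝ n u U) :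
    ContDiffOn ℝ n (heightForm P u) U :=
  (((innerSL ℝ).contDiff.comp_contDiffOn hu).clm_comp (hP.fderiv_of_isOpen hU le_rfl)).neg

theorem fderiv_heightForm_apply {P u : F → V} {k : F} (hP : ContDiffAt ℝ 2 P k)
    (hu : DifferentiableAt ℝ u k) (v w : F) :
    fderiv ℝ (heightForm P u) k v w =
      -(⟪fderiv ℝ u k v, fderiv ℝ P k w⟫ + ⟪u k, fderiv ℝ (fderiv ℝ P) k v w⟫) := by
  have hP' : DifferentiableAt ℝ (fderiv ℝ P) k :=
    (hP.fderiv_right (m := 1) le_rfl).differentiableAt one_ne_zero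
  have h : HasFDerivAt (heightForm P u) _ k :=
    ((innerSL ℝ).hasFDerivAt.comp k hu.hasFDerivAt).clm_comp hP'.hasFDerivAt |>.neg
  rw [h.fderiv]
  change -(⟪u k, fderiv ℝ (fderiv ℝ P) k v w⟫ + ⟪fderiv ℝ u k v, fderiv ℝ P k w⟫) = _
  ring

theorem fderiv_heightForm_symm_iff {P u : F → V} {k : F} (hP : ContDiffAt ℝ 2 P k)
    (hu : DifferentiableAt ℝ u k) :
    (∀ v w, fderiv ℝ (heightForm P u) k v w = fderiv ℝ (heightForm P u) k w v) ↔
      ∀ v w, ⟪fderiv ℝ u k v, fderiv ℝ P k w⟫ = ⟪fderiv ℝ u k w, fderiv ℝ P k v⟫ := by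
  refine forall₂_congr fun v w => ?_
  rw [fderiv_heightForm_apply hP hu, fderiv_heightForm_apply hP hu,
    (hP.isSymmSndFDerivAt (by simp)).eq v w, neg_inj, add_left_inj]

theorem inner_apply_symm_iff_prod {A B : ℝ × ℝ →L[ℝ] V} :
    (∀ v w, ⟪A v, B w⟫ = ⟪A w, B v⟫) ↔ ⟪B (1, 0), A (0, 1)⟫ = ⟪B (0, 1), A (1, 0)⟫ := by
  refine ⟨fun h => ?_, fun h v w => ?_⟩
  · rw [real_inner_comm, h, real_inner_comm]
  · have h' : ⟪A (0, 1), B (1, 0)⟫ = ⟪A (1, 0), B (0, 1)⟫ := by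
      rw [real_inner_comm, h, real_inner_comm]
    rw [A.apply_eq_fst_smul_add_snd_smul v, A.apply_eq_fst_smul_add_snd_smul w,
      B.apply_eq_fst_smul_add_snd_smul v, B.apply_eq_fst_smul_add_snd_smul w]
    simp only [inner_add_left, inner_add_right, real_inner_smul_left, real_inner_smul_right]
    rw [h']
    ring

end Lines

theorem isNormal_iff_exists_hasFDerivAt_heightForm {U : Set (ℝ × ℝ)} (hU : IsOpen U)
    {P u : ℝ × ℝ → E} (hP : DifferentiableOn ℝ P U) (hu : DifferentiableOn ℝ u U)
    (hunit : ∀ k ∈ U, ‖u k‖ = 1) :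
    IsNormal U P u ↔
      ∃ lam : ℝ × ℝ → ℝ, ContDiffOn ℝ ∞ lam U ∧ ∀ k ∈ U, HasFDerivAt lam (heightForm P u k) k := by
  refine exists_congr fun lam => and_congr_right fun hlam => forall₂_congr fun k hk => ?_
  have hk' : U ∈ 𝓝 k := hU.mem_nhds hk
  have hlamk := (hlam.differentiableOn (by simp) k hk).differentiableAt hk'
  have hunitk : ∀ᶠ x in 𝓝 k, ‖u x‖ = 1 := Filter.eventually_of_mem hk' hunit
  have hPk := (hP k hk).differentiableAt hk'
  have huk := (hu k hk).differentiableAt hk'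
  simp only [D1, D2, inner_fderiv_add_smul hPk huk hlamk hunitk]
  refine ⟨fun ⟨h₁, h₂⟩ => ?_, fun h => ?_⟩
  · have hθ : fderiv ℝ lam k = heightForm P u k := by
      refine ContinuousLinearMap.ext fun v => ?_
      rw [(heightForm P u k).apply_eq_fst_smul_add_snd_smul,
        (fderiv ℝ lam k).apply_eq_fst_smul_add_snd_smul, heightForm_apply, heightForm_apply]
      linear_combination v.1 * h₁ + v.2 * h₂
    exact hθ ▸ hlamk.hasFDerivAt
  · simp [h.fderiv, heightForm_apply]

theorem normal_iff_lagrangian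
    (U : Set (ℝ × ℝ)) (hU : IsOpen U) (hconv : Convex ℝ U)
    (P u : ℝ × ℝ → E)
    (hP : ContDiffOn ℝ (⊤ : ℕ∞) P U) (hu : ContDiffOn ℝ (⊤ : ℕ∞) u U)
    (hunit : ∀ k ∈ U, ‖u k‖ = 1) :
    IsNormal U P u ↔ ∀ k ∈ U, ⟪D1 P k, D2 u k⟫ = ⟪D2 P k, D1 u k⟫ := by
  have hθ : ContDiffOn ℝ ∞ (heightForm P u) U :=
    (hP.of_le ENat.coe_top_add_one.le).heightForm hU hu
  have hclosed : ∀ k ∈ U, (∀ v w, fderiv ℝ (heightForm P u) k v w =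
      fderiv ℝ (heightForm P u) k w v) ↔ ⟪D1 P k, D2 u k⟫ = ⟪D2 P k, D1 u k⟫ := fun k hk =>
    have hk' := hU.mem_nhds hk
    (fderiv_heightForm_symm_iff ((hP.contDiffAt hk').of_le (by norm_cast))
      ((hu.differentiableOn (by simp) k hk).differentiableAt hk')).trans inner_apply_symm_iff_prod
  rw [isNormal_iff_exists_hasFDerivAt_heightForm hU (hP.differentiableOn (by simp))
    (hu.differentiableOn (by simp)) hunit]
  constructor
  · rintro ⟨lam, -, hlam⟩ k hk
    have hk' := hU.mem_nhds hk
    have hθk := ((hθ.differentiableOn (by simp) k hk).differentiableAt hk').hasFDerivAt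
    exact (hclosed k hk).1
      (second_derivative_symmetric_of_eventually (Filter.eventually_of_mem hk' hlam) hθk)
  · intro hlag
    obtain ⟨lam, hlam, hprim⟩ := hconv.exists_contDiffOn_hasFDerivAt_of_fderiv_symmetric hU
      (n := ⊤) (by simp) hθ fun k hk => (hclosed k hk).2 (hlag k hk)
    exact ⟨lam, hlam.of_le (by simp), hprim⟩
end
end

section
/- Let Q, ν, u₁ : U → E be smooth maps on an open set U ⊆ ℝ × ℝ such that ‖ν k‖ = 1 and ⟪ν k, Dᵢ Q k⟫ = 0 for all k ∈ U and i = 1, 2 (Q k is the incidence point of the ray with parameter k on a mirror, and ν is a unit normal field of the mirror along Q). Define the reflected directions u₂ : U → E by u₂ k = u₁ k − 2 ⟪u₁ k, ν k⟫ • ν k. Then for every k ∈ U, ⟪D₁ Q k, D₂ u₂ k⟫ − ⟪D₂ Q k, D₁ u₂ k⟫ = ⟪D₁ Q k, D₂ u₁ k⟫ − ⟪D₂ Q k, D₁ u₁ k⟫. (Reflection on a smooth mirror preserves the symplectic form dP ∧ du on the space of oriented lines.) -/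
/-!
Pairing the derivative of `u₂ = u₁ - 2⟪u₁, ν⟫ ν` with the tangent vectors `DᵢQ ⊥ ν` shows that
reflection changes the form by `2⟪u₁, ν⟫ (⟪D₂Q, D₁ν⟫ - ⟪D₁Q, D₂ν⟫)`. Differentiating
`⟪ν, DⱼQ⟫ = 0` gives `⟪DᵢQ, Dⱼν⟫ = -⟪ν, DᵢDⱼQ⟫`, which is symmetric in `i, j` by the symmetry of
second derivatives, so the change vanishes.
-/

open RealInnerProductSpace Filter

noncomputable section

theorem fderiv_fderiv_apply {𝕜 G F : Type*} [NontriviallyNormedField 𝕜]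
    [NormedAddCommGroup G] [NormedSpace 𝕜 G] [NormedAddCommGroup F] [NormedSpace 𝕜 F]
    {f : G → F} {x : G} (hf : DifferentiableAt 𝕜 (fderiv 𝕜 f) x) (v w : G) :
    fderiv 𝕜 (fun y => fderiv 𝕜 f y v) x w = fderiv 𝕜 (fderiv 𝕜 f) x w v := by
  simp [fderiv_clm_apply hf (differentiableAt_const v)]

section Mirror

variable {G F : Type*} [NormedAddCommGroup G] [NormedSpace ℝ G]
  [NormedAddCommGroup F] [InnerProductSpace ℝ F] {f ν : G → F} {x : G}

theorem inner_fderiv_eq_neg_of_eventually_inner_eq_zero (hν : DifferentiableAt ℝ ν x)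
    (hf : DifferentiableAt ℝ (fderiv ℝ f) x) {v : G}
    (hv : (fun y => ⟪ν y, fderiv ℝ f y v⟫) =ᶠ[nhds x] 0) (w : G) :
    ⟪fderiv ℝ ν x w, fderiv ℝ f x v⟫ = -⟪ν x, fderiv ℝ (fderiv ℝ f) x w v⟫ := by
  have hzero : fderiv ℝ (fun y => ⟪ν y, fderiv ℝ f y v⟫) x w = 0 := by
    simp [hv.fderiv_eq]
  rw [fderiv_inner_apply (𝕜 := ℝ) hν (hf.clm_apply (differentiableAt_const v)),
    fderiv_fderiv_apply hf] at hzero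
  linarith

/-- The second fundamental form of `f` along the normal field `ν` is symmetric. -/
theorem inner_fderiv_comm_of_eventually_normal (hfs : IsSymmSndFDerivAt ℝ f x)
    (hf : DifferentiableAt ℝ (fderiv ℝ f) x) (hν : DifferentiableAt ℝ ν x) {v w : G}
    (hv : (fun y => ⟪ν y, fderiv ℝ f y v⟫) =ᶠ[nhds x] 0)
    (hw : (fun y => ⟪ν y, fderiv ℝ f y w⟫) =ᶠ[nhds x] 0) :
    ⟪fderiv ℝ f x v, fderiv ℝ ν x w⟫ = ⟪fderiv ℝ f x w, fderiv ℝ ν x v⟫ := by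
  rw [real_inner_comm (fderiv ℝ ν x w), inner_fderiv_eq_neg_of_eventually_inner_eq_zero hν hf hv,
    real_inner_comm (fderiv ℝ ν x v), inner_fderiv_eq_neg_of_eventually_inner_eq_zero hν hf hw,
    hfs v w]

theorem inner_fderiv_reflect_of_inner_eq_zero {u : G → F} (hu : DifferentiableAt ℝ u x)
    (hν : DifferentiableAt ℝ ν x) {a : F} (ha : ⟪ν x, a⟫ = 0) (w : G) :
    ⟪a, fderiv ℝ (fun y => u y - (2 * ⟪u y, ν y⟫) • ν y) x w⟫ =
      ⟪a, fderiv ℝ u x w⟫ - 2 * ⟪u x, ν x⟫ * ⟪a, fderiv ℝ ν x w⟫ := by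
  have hc : DifferentiableAt ℝ (fun y => 2 * ⟪u y, ν y⟫) x := (hu.inner ℝ hν).const_mul 2
  rw [fderiv_fun_sub hu (hc.fun_smul hν), fderiv_fun_smul hc hν]
  simp [inner_sub_right, inner_add_right, real_inner_smul_right, real_inner_comm (ν x) a, ha]

end Mirror

theorem reflection_is_symplectic_general
    (U : Set (ℝ × ℝ)) (hU : IsOpen U)
    (Q nu u₁ : ℝ × ℝ → E)
    (hQ : ContDiffOn ℝ (⊤ : ℕ∞) Q U) (hnu : ContDiffOn ℝ (⊤ : ℕ∞) nu U)
    (hu₁ : ContDiffOn ℝ (⊤ : ℕ∞) u₁ U)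
    (horth : ∀ k ∈ U, ⟪nu k, D1 Q k⟫ = 0 ∧ ⟪nu k, D2 Q k⟫ = 0)
    (u₂ : ℝ × ℝ → E)
    (hu₂ : ∀ k, u₂ k = u₁ k - (2 * ⟪u₁ k, nu k⟫) • nu k) :
    ∀ k ∈ U,
      ⟪D1 Q k, D2 u₂ k⟫ - ⟪D2 Q k, D1 u₂ k⟫ =
      ⟪D1 Q k, D2 u₁ k⟫ - ⟪D2 Q k, D1 u₁ k⟫ := by
  intro k hk
  obtain rfl : u₂ = _ := funext hu₂
  have hUk : U ∈ nhds k := hU.mem_nhds hk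
  have hQk : ContDiffAt ℝ 2 Q k := (hQ.contDiffAt hUk).of_le (by norm_cast)
  have hQ2 : DifferentiableAt ℝ (fderiv ℝ Q) k :=
    (hQk.fderiv_right (m := 1) le_rfl).differentiableAt (by simp)
  have hnuk : DifferentiableAt ℝ nu k := (hnu.contDiffAt hUk).differentiableAt (by simp)
  have hu₁k : DifferentiableAt ℝ u₁ k := (hu₁.contDiffAt hUk).differentiableAt (by simp)
  have hsymm : ⟪D1 Q k, D2 nu k⟫ = ⟪D2 Q k, D1 nu k⟫ :=
    inner_fderiv_comm_of_eventually_normal (hQk.isSymmSndFDerivAt (by simp)) hQ2 hnuk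
      (eventually_of_mem hUk fun y hy => (horth y hy).1)
      (eventually_of_mem hUk fun y hy => (horth y hy).2)
  obtain ⟨h1, h2⟩ := horth k hk
  simp only [D1, D2] at h1 h2 hsymm ⊢
  rw [inner_fderiv_reflect_of_inner_eq_zero hu₁k hnuk h1,
    inner_fderiv_reflect_of_inner_eq_zero hu₁k hnuk h2, hsymm]
  ring

theorem reflection_is_symplectic
    (U : Set (ℝ × ℝ)) (hU : IsOpen U)
    (Q nu u₁ : ℝ × ℝ → E)
    (hQ : ContDiffOn ℝ (⊤ : ℕ∞) Q U) (hnu : ContDiffOn ℝ (⊤ : ℕ∞) nu U)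
    (hu₁ : ContDiffOn ℝ (⊤ : ℕ∞) u₁ U)
    (hnunit : ∀ k ∈ U, ‖nu k‖ = 1)
    (horth : ∀ k ∈ U, ⟪nu k, D1 Q k⟫ = 0 ∧ ⟪nu k, D2 Q k⟫ = 0)
    (u₂ : ℝ × ℝ → E)
    (hu₂ : ∀ k, u₂ k = u₁ k - (2 * ⟪u₁ k, nu k⟫) • nu k) :
    ∀ k ∈ U,
      ⟪D1 Q k, D2 u₂ k⟫ - ⟪D2 Q k, D1 u₂ k⟫ =
      ⟪D1 Q k, D2 u₁ k⟫ - ⟪D2 Q k, D1 u₁ k⟫ :=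
  reflection_is_symplectic_general U hU Q nu u₁ hQ hnu hu₁ horth u₂ hu₂
end
end

section
/- Let Q, ν, u₁, u₂ : U → E be smooth maps on an open set U ⊆ ℝ × ℝ such that ‖ν k‖ = 1 and ⟪ν k, Dᵢ Q k⟫ = 0 for all k ∈ U and i = 1, 2, and let n₁, n₂ be positive real numbers such that Snell's law holds pointwise: n₂ • (u₂ k − ⟪u₂ k, ν k⟫ • ν k) = n₁ • (u₁ k − ⟪u₁ k, ν k⟫ • ν k) for all k ∈ U. Then for every k ∈ U, n₂ • (⟪D₁ Q k, D₂ u₂ k⟫ − ⟪D₂ Q k, D₁ u₂ k⟫) = n₁ • (⟪D₁ Q k, D₂ u₁ k⟫ − ⟪D₂ Q k, D₁ u₁ k⟫). (Refraction through a smooth surface separating media of refractive indices n₁ and n₂ sends the symplectic form n₁·(dP ∧ du) to n₂·(dP ∧ du).) -/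
open RealInnerProductSpace

noncomputable section

/-!
Put `w = n₂ • u₂ - n₁ • u₁`. Snell's law says exactly that `w` is normal to the surface, so
`⟪D1 Q, w⟫` and `⟪D2 Q, w⟫` vanish identically on `U`. Differentiating the first in the second
direction and the second in the first direction and subtracting, the second derivatives of `Q`
cancel by symmetry, which leaves `⟪D1 Q, D2 w⟫ = ⟪D2 Q, D1 w⟫`; expanding `w` gives the claim.
-/

section

variable {G F : Type*} [NormedAddCommGroup G] [NormedSpace ℝ G]
  [NormedAddCommGroup F] [InnerProductSpace ℝ F]

theorem fderiv_inner_fderiv_apply {Q w : G → F} {k : G} (hQ : ContDiffAt ℝ 2 Q k)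
    (hw : DifferentiableAt ℝ w k) (a b : G) :
    fderiv ℝ (fun x ↦ ⟪fderiv ℝ Q x a, w x⟫) k b =
      ⟪fderiv ℝ Q k a, fderiv ℝ w k b⟫ + ⟪fderiv ℝ (fderiv ℝ Q) k b a, w k⟫ := by
  have hQ' : DifferentiableAt ℝ (fderiv ℝ Q) k :=
    (hQ.fderiv_right (m := 1) le_rfl).differentiableAt one_ne_zero
  rw [fderiv_inner_apply ℝ (hQ'.clm_apply (differentiableAt_const a)) hw,
    fderiv_clm_apply hQ' (differentiableAt_const a)]
  simp

theorem fderiv_inner_fderiv_sub_swap {Q w : G → F} {k : G} (hQ : ContDiffAt ℝ 2 Q k)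
    (hw : DifferentiableAt ℝ w k) (a b : G) :
    fderiv ℝ (fun x ↦ ⟪fderiv ℝ Q x a, w x⟫) k b - fderiv ℝ (fun x ↦ ⟪fderiv ℝ Q x b, w x⟫) k a =
      ⟪fderiv ℝ Q k a, fderiv ℝ w k b⟫ - ⟪fderiv ℝ Q k b, fderiv ℝ w k a⟫ := by
  have hsymm : fderiv ℝ (fderiv ℝ Q) k b a = fderiv ℝ (fderiv ℝ Q) k a b :=
    hQ.isSymmSndFDerivAt (by simp [minSmoothness_of_isRCLikeNormedField]) b a
  rw [fderiv_inner_fderiv_apply hQ hw, fderiv_inner_fderiv_apply hQ hw, hsymm]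
  ring

theorem inner_fderiv_comm_of_inner_eventuallyEq_zero {Q w : G → F} {k : G}
    (hQ : ContDiffAt ℝ 2 Q k) (hw : DifferentiableAt ℝ w k) {a b : G}
    (ha : (fun x ↦ ⟪fderiv ℝ Q x a, w x⟫) =ᶠ[nhds k] 0)
    (hb : (fun x ↦ ⟪fderiv ℝ Q x b, w x⟫) =ᶠ[nhds k] 0) :
    ⟪fderiv ℝ Q k a, fderiv ℝ w k b⟫ = ⟪fderiv ℝ Q k b, fderiv ℝ w k a⟫ := by
  have h := fderiv_inner_fderiv_sub_swap hQ hw a b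
  rw [ha.fderiv_eq, hb.fderiv_eq] at h
  simpa [sub_eq_zero] using h.symm

end

theorem inner_smul_sub_smul_eq_zero_of_snell {F : Type*} [NormedAddCommGroup F]
    [InnerProductSpace ℝ F] {u₁ u₂ ν t : F} {n₁ n₂ : ℝ}
    (h : n₂ • (u₂ - ⟪u₂, ν⟫ • ν) = n₁ • (u₁ - ⟪u₁, ν⟫ • ν)) (ht : ⟪ν, t⟫ = 0) :
    ⟪t, n₂ • u₂ - n₁ • u₁⟫ = 0 := by
  rw [smul_sub, smul_sub, sub_eq_sub_iff_sub_eq_sub] at h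
  rw [h, inner_sub_right, inner_smul_right, inner_smul_right, inner_smul_right, inner_smul_right,
    real_inner_comm ν t, ht]
  ring

theorem refraction_is_symplectic_general
    (U : Set (ℝ × ℝ)) (hU : IsOpen U)
    (Q nu u₁ u₂ : ℝ × ℝ → E)
    (hQ : ContDiffOn ℝ (⊤ : ℕ∞) Q U)
    (hu₁ : ContDiffOn ℝ (⊤ : ℕ∞) u₁ U) (hu₂ : ContDiffOn ℝ (⊤ : ℕ∞) u₂ U)
    (horth : ∀ k ∈ U, ⟪nu k, D1 Q k⟫ = 0 ∧ ⟪nu k, D2 Q k⟫ = 0)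
    (n₁ n₂ : ℝ)
    (hsnell : ∀ k ∈ U,
      n₂ • (u₂ k - ⟪u₂ k, nu k⟫ • nu k) = n₁ • (u₁ k - ⟪u₁ k, nu k⟫ • nu k)) :
    ∀ k ∈ U,
      n₂ • (⟪D1 Q k, D2 u₂ k⟫ - ⟪D2 Q k, D1 u₂ k⟫) =
      n₁ • (⟪D1 Q k, D2 u₁ k⟫ - ⟪D2 Q k, D1 u₁ k⟫) := by
  intro k hk
  have hkU : U ∈ nhds k := hU.mem_nhds hk
  have hu₁k := (hu₁.contDiffAt hkU).differentiableAt (by simp)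
  have hu₂k := (hu₂.contDiffAt hkU).differentiableAt (by simp)
  have hw := (hu₂k.hasFDerivAt.const_smul n₂).sub (hu₁k.hasFDerivAt.const_smul n₁)
  have hnormal : ∀ᶠ x in nhds k,
      ⟪D1 Q x, n₂ • u₂ x - n₁ • u₁ x⟫ = 0 ∧ ⟪D2 Q x, n₂ • u₂ x - n₁ • u₁ x⟫ = 0 := by
    filter_upwards [hkU] with x hx
    exact ⟨inner_smul_sub_smul_eq_zero_of_snell (hsnell x hx) (horth x hx).1,
      inner_smul_sub_smul_eq_zero_of_snell (hsnell x hx) (horth x hx).2⟩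
  have hcomm := inner_fderiv_comm_of_inner_eventuallyEq_zero (a := (1, 0)) (b := (0, 1))
    ((hQ.contDiffAt hkU).of_le (WithTop.coe_le_coe.2 le_top)) hw.differentiableAt
    (hnormal.mono fun _ h ↦ h.1) (hnormal.mono fun _ h ↦ h.2)
  simp only [hw.fderiv, sub_apply, smul_apply, inner_sub_right, inner_smul_right] at hcomm
  simp only [D1, D2, smul_eq_mul]
  linear_combination hcomm

theorem refraction_is_symplectic
    (U : Set (ℝ × ℝ)) (hU : IsOpen U)
    (Q nu u₁ u₂ : ℝ × ℝ → E)
    (hQ : ContDiffOn ℝ (⊤ : ℕ∞) Q U) (hnu : ContDiffOn ℝ (⊤ : ℕ∞) nu U)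
    (hu₁ : ContDiffOn ℝ (⊤ : ℕ∞) u₁ U) (hu₂ : ContDiffOn ℝ (⊤ : ℕ∞) u₂ U)
    (hnunit : ∀ k ∈ U, ‖nu k‖ = 1)
    (horth : ∀ k ∈ U, ⟪nu k, D1 Q k⟫ = 0 ∧ ⟪nu k, D2 Q k⟫ = 0)
    (n₁ n₂ : ℝ) (hn₁ : 0 < n₁) (hn₂ : 0 < n₂)
    (hsnell : ∀ k ∈ U,
      n₂ • (u₂ k - ⟪u₂ k, nu k⟫ • nu k) = n₁ • (u₁ k - ⟪u₁ k, nu k⟫ • nu k)) :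
    ∀ k ∈ U,
      n₂ • (⟪D1 Q k, D2 u₂ k⟫ - ⟪D2 Q k, D1 u₂ k⟫) =
      n₁ • (⟪D1 Q k, D2 u₁ k⟫ - ⟪D2 Q k, D1 u₁ k⟫) :=
  refraction_is_symplectic_general U hU Q nu u₁ u₂ hQ hu₁ hu₂ horth n₁ n₂ hsnell
end
end

section
/- Let u₁, ν ∈ E with ‖u₁‖ = 1, ‖ν‖ = 1 and ⟪u₁, ν⟫ > 0, and let n₁, n₂ be positive real numbers such that n₁ • ‖u₁ − ⟪u₁, ν⟫ • ν‖ < n₂. Then there exists a unique u₂ ∈ E with ‖u₂‖ = 1, ⟪u₂, ν⟫ > 0, and n₂ • (u₂ − ⟪u₂, ν⟫ • ν) = n₁ • (u₁ − ⟪u₁, ν⟫ • ν). (Existence and uniqueness of the refracted ray given by Snell's law when there is no total reflection.) -/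
open RealInnerProductSpace

noncomputable section

private lemma sq_eq_of_pos {a b : ℝ} (ha : 0 < a) (hb : 0 < b) (h : a ^ 2 = b ^ 2) : a = b := by
  nlinarith

theorem snell_existence_uniqueness
    (u₁ nu : E) (hu₁ : ‖u₁‖ = 1) (hnu : ‖nu‖ = 1) (hpos : 0 < ⟪u₁, nu⟫)
    (n₁ n₂ : ℝ) (hn₁ : 0 < n₁) (hn₂ : 0 < n₂)
    (hnotot : n₁ • ‖u₁ - ⟪u₁, nu⟫ • nu‖ < n₂) :
    ∃! u₂ : E, ‖u₂‖ = 1 ∧ 0 < ⟪u₂, nu⟫ ∧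
      n₂ • (u₂ - ⟪u₂, nu⟫ • nu) = n₁ • (u₁ - ⟪u₁, nu⟫ • nu) := by
  set w : E := u₁ - ⟪u₁, nu⟫ • nu with hw
  set t : E := (n₁ / n₂) • w with ht
  have hnn : ⟪nu, nu⟫ = 1 := by
    rw [real_inner_self_eq_norm_sq, hnu]; norm_num
  have htnu : ⟪t, nu⟫ = 0 := by
    rw [ht, hw, real_inner_smul_left, inner_sub_left, real_inner_smul_left, hnn]
    ring
  have htnorm : ‖t‖ < 1 := by
    rw [ht, norm_smul]
    have h1 : n₁ * ‖w‖ < n₂ := by simpa using hnotot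
    rw [Real.norm_eq_abs, abs_of_pos (by positivity : (0:ℝ) < n₁ / n₂)]
    rw [div_mul_eq_mul_div, div_lt_one hn₂]
    exact h1
  have htn2 : ‖t‖ ^ 2 < 1 := by
    have := norm_nonneg t
    nlinarith
  set c : ℝ := Real.sqrt (1 - ‖t‖ ^ 2) with hcdef
  have hc : 0 < c := Real.sqrt_pos.2 (by linarith)
  have hc2 : c ^ 2 = 1 - ‖t‖ ^ 2 := Real.sq_sqrt (by linarith)
  clear_value w t c
  refine ⟨t + c • nu, ⟨?_, ?_, ?_⟩, ?_⟩
  · -- norm 1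
    have hcn : ‖c • nu‖ = c := by
      rw [norm_smul, Real.norm_eq_abs, abs_of_pos hc, hnu, mul_one]
    have hsq : ‖t + c • nu‖ ^ 2 = 1 := by
      rw [norm_add_sq_real, real_inner_smul_right, htnu, hcn]
      nlinarith
    nlinarith [norm_nonneg (t + c • nu)]
  · rw [inner_add_left, htnu, real_inner_smul_left, hnn]
    simpa using hc
  · have hip : ⟪t + c • nu, nu⟫ = c := by
      rw [inner_add_left, htnu, real_inner_smul_left, hnn]; ring
    rw [hip]
    have : t + c • nu - c • nu = t := by abel
    rw [this, ht, smul_smul]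
    rw [mul_div_cancel₀ _ (ne_of_gt hn₂)]
  · rintro v ⟨hv1, hv2, hv3⟩
    have hveq : v - ⟪v, nu⟫ • nu = t := by
      have := congrArg (fun x => (n₂⁻¹ : ℝ) • x) hv3
      simp only [smul_smul, inv_mul_cancel₀ (ne_of_gt hn₂), one_smul] at this
      rw [this, ht, inv_mul_eq_div]
    have hv : v = t + ⟪v, nu⟫ • nu := by
      rw [← hveq]; abel
    have hvsq : ⟪v, nu⟫ ^ 2 = c ^ 2 := by
      have h1 : ‖v‖ ^ 2 = 1 := by rw [hv1]; norm_num
      have hin : ‖⟪v, nu⟫ • nu‖ = |⟪v, nu⟫| := by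
        rw [norm_smul, Real.norm_eq_abs, hnu, mul_one]
      rw [hv, norm_add_sq_real, real_inner_smul_right, htnu, hin] at h1
      have := sq_abs ⟪v, nu⟫
      nlinarith
    rw [hv, sq_eq_of_pos hv2 hc hvsq]
end
end

section
/- Let U ⊆ ℝ × ℝ be open and convex, and let Q, ν, u₁ : U → E be smooth with ‖u₁ k‖ = 1, ‖ν k‖ = 1 and ⟪ν k, Dᵢ Q k⟫ = 0 for all k ∈ U and i = 1, 2. Define u₂ k = u₁ k − 2 ⟪u₁ k, ν k⟫ • ν k. If the incident family (Q, u₁) is normal, then the reflected family (Q, u₂) is normal. (Malus' theorem for a single reflection on a smooth mirror.) -/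
/-! Reflection `u ↦ u - 2⟪u, ν⟫ • ν` in a unit normal `ν` keeps `u` a unit vector and, since `ν` is
orthogonal to the tangent vectors `Dᵢ Q` of the mirror, leaves `⟪u, Dᵢ Q⟫` unchanged. For a unit
direction field `u` we have `⟪u, Dᵢ u⟫ = 0`, so the orthogonality condition for the surface
`Q + λ • u` reads `⟪u, Dᵢ Q⟫ + Dᵢ λ = 0`; hence the `λ` of the incident family also works for the
reflected one. -/

open RealInnerProductSpace

noncomputable section

open Topology

section

variable {F G : Type*} [NormedAddCommGroup F] [NormedSpace ℝ F]
  [NormedAddCommGroup G] [InnerProductSpace ℝ G]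

lemma inner_fderiv_eq_zero_of_norm_eventually_eq_one {f : F → G} {k : F}
    (hf : DifferentiableAt ℝ f k) (hnorm : ∀ᶠ x in 𝓝 k, ‖f x‖ = 1) (v : F) :
    ⟪f k, fderiv ℝ f k v⟫ = 0 := by
  have hconst : HasFDerivAt (‖f ·‖ ^ 2) (0 : F →L[ℝ] ℝ) k :=
    (hasFDerivAt_const (1 : ℝ) k).congr_of_eventuallyEq <| by
      filter_upwards [hnorm] with x hx
      simp [hx]
  have h := congrArg (fun L : F →L[ℝ] ℝ => L v) (hf.hasFDerivAt.norm_sq.unique hconst)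
  simpa using h

lemma inner_fderiv_add_smul_of_norm_eventually_eq_one {P u : F → G} {lam : F → ℝ} {k : F}
    (hP : DifferentiableAt ℝ P k) (hu : DifferentiableAt ℝ u k)
    (hlam : DifferentiableAt ℝ lam k) (hunit : ∀ᶠ x in 𝓝 k, ‖u x‖ = 1) (v : F) :
    ⟪u k, fderiv ℝ (fun x => P x + lam x • u x) k v⟫ =
      ⟪u k, fderiv ℝ P k v⟫ + fderiv ℝ lam k v := by
  rw [fderiv_fun_add hP (hlam.fun_smul hu), fderiv_fun_smul hlam hu]
  simp only [add_apply, smul_apply, ContinuousLinearMap.smulRight_apply, inner_add_right,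
    real_inner_smul_right,
    inner_fderiv_eq_zero_of_norm_eventually_eq_one hu hunit, real_inner_self_eq_norm_sq,
    hunit.self_of_nhds]
  ring

lemma norm_sub_two_inner_smul {ν : G} (hν : ‖ν‖ = 1) (u : G) :
    ‖u - (2 * ⟪u, ν⟫) • ν‖ = ‖u‖ := by
  rw [← sq_eq_sq₀ (norm_nonneg _) (norm_nonneg _), ← real_inner_self_eq_norm_sq,
    ← real_inner_self_eq_norm_sq]
  simp only [inner_sub_left, inner_sub_right, real_inner_smul_left, real_inner_smul_right,
    real_inner_self_eq_norm_sq ν, hν, real_inner_comm ν u]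
  ring

lemma inner_sub_two_inner_smul_of_inner_eq_zero {ν w : G} (hw : ⟪ν, w⟫ = 0) (u : G) :
    ⟪u - (2 * ⟪u, ν⟫) • ν, w⟫ = ⟪u, w⟫ := by
  rw [inner_sub_left, real_inner_smul_left, hw, mul_zero, sub_zero]

end

theorem malus_single_reflection_general
    (U : Set (ℝ × ℝ)) (hU : IsOpen U)
    (Q nu u₁ : ℝ × ℝ → E)
    (hQ : ContDiffOn ℝ (⊤ : ℕ∞) Q U) (hnu : ContDiffOn ℝ (⊤ : ℕ∞) nu U)
    (hu₁ : ContDiffOn ℝ (⊤ : ℕ∞) u₁ U)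
    (hu₁unit : ∀ k ∈ U, ‖u₁ k‖ = 1) (hnunit : ∀ k ∈ U, ‖nu k‖ = 1)
    (horth : ∀ k ∈ U, ⟪nu k, D1 Q k⟫ = 0 ∧ ⟪nu k, D2 Q k⟫ = 0)
    (u₂ : ℝ × ℝ → E)
    (hu₂ : ∀ k, u₂ k = u₁ k - (2 * ⟪u₁ k, nu k⟫) • nu k)
    (hnormal : IsNormal U Q u₁) :
    IsNormal U Q u₂ := by
  obtain ⟨lam, hlam, hlam_orth⟩ := hnormal
  refine ⟨lam, hlam, fun k hk => ?_⟩
  have hUk : U ∈ 𝓝 k := hU.mem_nhds hk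
  have hQk := (hQ.contDiffAt hUk).differentiableAt (by simp)
  have hnuk := (hnu.contDiffAt hUk).differentiableAt (by simp)
  have hu₁k := (hu₁.contDiffAt hUk).differentiableAt (by simp)
  have hlamk := (hlam.contDiffAt hUk).differentiableAt (by simp)
  have hu₂k : DifferentiableAt ℝ u₂ k := by
    rw [show u₂ = _ from funext hu₂]
    exact hu₁k.sub (((hu₁k.inner ℝ hnuk).const_mul 2).smul hnuk)
  have hu₁_unit : ∀ᶠ x in 𝓝 k, ‖u₁ x‖ = 1 := Filter.eventually_of_mem hUk hu₁unit
  have hu₂_unit : ∀ᶠ x in 𝓝 k, ‖u₂ x‖ = 1 := Filter.eventually_of_mem hUk fun x hx => by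
    rw [hu₂, norm_sub_two_inner_smul (hnunit x hx), hu₁unit x hx]
  have reflected_orth : ∀ v, ⟪nu k, fderiv ℝ Q k v⟫ = 0 →
      ⟪u₁ k, fderiv ℝ (fun x => Q x + lam x • u₁ x) k v⟫ = 0 →
      ⟪u₂ k, fderiv ℝ (fun x => Q x + lam x • u₂ x) k v⟫ = 0 := by
    intro v hv h₁
    rwa [inner_fderiv_add_smul_of_norm_eventually_eq_one hQk hu₂k hlamk hu₂_unit, hu₂ k,
      inner_sub_two_inner_smul_of_inner_eq_zero hv,
      ← inner_fderiv_add_smul_of_norm_eventually_eq_one hQk hu₁k hlamk hu₁_unit]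
  exact ⟨reflected_orth _ (horth k hk).1 (hlam_orth k hk).1,
    reflected_orth _ (horth k hk).2 (hlam_orth k hk).2⟩

theorem malus_single_reflection
    (U : Set (ℝ × ℝ)) (hU : IsOpen U) (hconv : Convex ℝ U)
    (Q nu u₁ : ℝ × ℝ → E)
    (hQ : ContDiffOn ℝ (⊤ : ℕ∞) Q U) (hnu : ContDiffOn ℝ (⊤ : ℕ∞) nu U)
    (hu₁ : ContDiffOn ℝ (⊤ : ℕ∞) u₁ U)
    (hu₁unit : ∀ k ∈ U, ‖u₁ k‖ = 1) (hnunit : ∀ k ∈ U, ‖nu k‖ = 1)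
    (horth : ∀ k ∈ U, ⟪nu k, D1 Q k⟫ = 0 ∧ ⟪nu k, D2 Q k⟫ = 0)
    (u₂ : ℝ × ℝ → E)
    (hu₂ : ∀ k, u₂ k = u₁ k - (2 * ⟪u₁ k, nu k⟫) • nu k)
    (hnormal : IsNormal U Q u₁) :
    IsNormal U Q u₂ :=
  malus_single_reflection_general U hU Q nu u₁ hQ hnu hu₁ hu₁unit hnunit horth u₂ hu₂ hnormal

end
end

section
/- Let U ⊆ ℝ × ℝ be open and convex, let Q, ν, u₁, u₂ : U → E be smooth with ‖u₁ k‖ = 1, ‖u₂ k‖ = 1, ‖ν k‖ = 1 and ⟪ν k, Dᵢ Q k⟫ = 0 for all k ∈ U and i = 1, 2, and let n₁, n₂ be positive real numbers such that n₂ • (u₂ k − ⟪u₂ k, ν k⟫ • ν k) = n₁ • (u₁ k − ⟪u₁ k, ν k⟫ • ν k) for all k ∈ U. If the incident family (Q, u₁) is normal, then the refracted family (Q, u₂) is normal. (Malus' theorem for a single refraction through a smooth surface separating transparent media of refractive indices n₁ and n₂.) -/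
/-!
If the incident wavefront is `Q + λ • u₁`, its orthogonality to the rays says `Dλ = -⟪u₁, DQ⟫`,
because `u₁` is a unit field and so `⟪u₁, Du₁⟫ = 0`. Snell's law, paired with the tangent vectors
`DQ` of the refracting surface (which are orthogonal to `ν`), gives `n₂ ⟪u₂, DQ⟫ = n₁ ⟪u₁, DQ⟫`.
Hence `μ = (n₁ / n₂) λ` satisfies `Dμ = -⟪u₂, DQ⟫`, i.e. `Q + μ • u₂` is a refracted wavefront.
-/

open RealInnerProductSpace

noncomputable section

open Filter Topology

section UnitField

variable {X F : Type*} [NormedAddCommGroup X] [NormedSpace ℝ X]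
  [NormedAddCommGroup F] [InnerProductSpace ℝ F]

theorem inner_fderiv_eq_zero_of_norm_eq_one {u : X → F} {k : X}
    (hu : DifferentiableAt ℝ u k) (hnorm : ∀ᶠ x in 𝓝 k, ‖u x‖ = 1) (v : X) :
    ⟪u k, fderiv ℝ u k v⟫ = 0 := by
  have hconst : (fun x => ⟪u x, u x⟫) =ᶠ[𝓝 k] fun _ => (1 : ℝ) := by
    filter_upwards [hnorm] with x hx
    rw [real_inner_self_eq_norm_sq, hx, one_pow]
  have hderiv := fderiv_inner_apply ℝ hu hu v
  rw [hconst.fderiv_eq, fderiv_const_apply, zero_apply, real_inner_comm (u k)] at hderiv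
  linarith

theorem inner_fderiv_add_smul_of_norm_eq_one {P u : X → F} {lam : X → ℝ} {k : X}
    (hP : DifferentiableAt ℝ P k) (hlam : DifferentiableAt ℝ lam k)
    (hu : DifferentiableAt ℝ u k) (hnorm : ∀ᶠ x in 𝓝 k, ‖u x‖ = 1) (v : X) :
    ⟪u k, fderiv ℝ (fun x => P x + lam x • u x) k v⟫ =
      ⟪u k, fderiv ℝ P k v⟫ + fderiv ℝ lam k v := by
  have hunit : ⟪u k, u k⟫ = 1 := by
    rw [real_inner_self_eq_norm_sq, hnorm.self_of_nhds, one_pow]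
  rw [fderiv_fun_add hP (hlam.fun_smul hu), fderiv_fun_smul hlam hu]
  simp only [add_apply, smul_apply, ContinuousLinearMap.smulRight_apply, inner_add_right,
    real_inner_smul_right, hunit, inner_fderiv_eq_zero_of_norm_eq_one hu hnorm v]
  ring

end UnitField

theorem inner_tangent_of_snell {F : Type*} [NormedAddCommGroup F] [InnerProductSpace ℝ F]
    {u₁ u₂ ν w : F} {n₁ n₂ : ℝ}
    (hsnell : n₂ • (u₂ - ⟪u₂, ν⟫ • ν) = n₁ • (u₁ - ⟪u₁, ν⟫ • ν)) (hw : ⟪ν, w⟫ = 0) :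
    n₂ * ⟪u₂, w⟫ = n₁ * ⟪u₁, w⟫ := by
  simpa only [real_inner_smul_left, inner_sub_left, hw, mul_zero, sub_zero] using
    congrArg (⟪·, w⟫) hsnell

theorem malus_single_refraction_general
    (U : Set (ℝ × ℝ)) (hU : IsOpen U)
    (Q nu u₁ u₂ : ℝ × ℝ → E)
    (hQ : ContDiffOn ℝ (⊤ : ℕ∞) Q U)
    (hu₁ : ContDiffOn ℝ (⊤ : ℕ∞) u₁ U) (hu₂ : ContDiffOn ℝ (⊤ : ℕ∞) u₂ U)
    (hu₁unit : ∀ k ∈ U, ‖u₁ k‖ = 1) (hu₂unit : ∀ k ∈ U, ‖u₂ k‖ = 1)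
    (horth : ∀ k ∈ U, ⟪nu k, D1 Q k⟫ = 0 ∧ ⟪nu k, D2 Q k⟫ = 0)
    (n₁ n₂ : ℝ) (hn₂ : 0 < n₂)
    (hsnell : ∀ k ∈ U,
      n₂ • (u₂ k - ⟪u₂ k, nu k⟫ • nu k) = n₁ • (u₁ k - ⟪u₁ k, nu k⟫ • nu k))
    (hnormal : IsNormal U Q u₁) :
    IsNormal U Q u₂ := by
  obtain ⟨lam, hlam, hlam_orth⟩ := hnormal
  refine ⟨fun k => n₁ / n₂ * lam k, contDiffOn_const.mul hlam, fun k hk => ?_⟩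
  have hkU : U ∈ 𝓝 k := hU.mem_nhds hk
  have hQd := (hQ.differentiableOn (by simp)).differentiableAt hkU
  have hlamd := (hlam.differentiableOn (by simp)).differentiableAt hkU
  have hu₁d := (hu₁.differentiableOn (by simp)).differentiableAt hkU
  have hu₂d := (hu₂.differentiableOn (by simp)).differentiableAt hkU
  have refracted : ∀ v : ℝ × ℝ, ⟪nu k, fderiv ℝ Q k v⟫ = 0 →
      ⟪u₁ k, fderiv ℝ (fun x => Q x + lam x • u₁ x) k v⟫ = 0 →
      ⟪u₂ k, fderiv ℝ (fun x => Q x + (n₁ / n₂ * lam x) • u₂ x) k v⟫ = 0 := by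
    intro v htangent hincident
    have hsnell_v := inner_tangent_of_snell (hsnell k hk) htangent
    rw [inner_fderiv_add_smul_of_norm_eq_one hQd hlamd hu₁d
      (eventually_of_mem hkU hu₁unit)] at hincident
    rw [inner_fderiv_add_smul_of_norm_eq_one hQd (hlamd.const_mul _) hu₂d
      (eventually_of_mem hkU hu₂unit), fderiv_const_mul hlamd, smul_apply, smul_eq_mul]
    field_simp
    linear_combination hsnell_v + n₁ * hincident
  exact ⟨refracted _ (horth k hk).1 (hlam_orth k hk).1,
    refracted _ (horth k hk).2 (hlam_orth k hk).2⟩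

theorem malus_single_refraction
    (U : Set (ℝ × ℝ)) (hU : IsOpen U) (hconv : Convex ℝ U)
    (Q nu u₁ u₂ : ℝ × ℝ → E)
    (hQ : ContDiffOn ℝ (⊤ : ℕ∞) Q U) (hnu : ContDiffOn ℝ (⊤ : ℕ∞) nu U)
    (hu₁ : ContDiffOn ℝ (⊤ : ℕ∞) u₁ U) (hu₂ : ContDiffOn ℝ (⊤ : ℕ∞) u₂ U)
    (hu₁unit : ∀ k ∈ U, ‖u₁ k‖ = 1) (hu₂unit : ∀ k ∈ U, ‖u₂ k‖ = 1)
    (hnunit : ∀ k ∈ U, ‖nu k‖ = 1)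
    (horth : ∀ k ∈ U, ⟪nu k, D1 Q k⟫ = 0 ∧ ⟪nu k, D2 Q k⟫ = 0)
    (n₁ n₂ : ℝ) (hn₁ : 0 < n₁) (hn₂ : 0 < n₂)
    (hsnell : ∀ k ∈ U,
      n₂ • (u₂ k - ⟪u₂ k, nu k⟫ • nu k) = n₁ • (u₁ k - ⟪u₁ k, nu k⟫ • nu k))
    (hnormal : IsNormal U Q u₁) :
    IsNormal U Q u₂ :=
  malus_single_refraction_general U hU Q nu u₁ u₂ hQ hu₁ hu₂ hu₁unit hu₂unit horth n₁ n₂ hn₂ hsnell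
    hnormal
end
end

section
/- Let u, p ∈ E with ‖u‖ = 1 and ⟪u, p⟫ = 0, and consider the subspace T = {(v, w) ∈ E × E : ⟪u, w⟫ = 0 and ⟪u, v⟫ + ⟪p, w⟫ = 0} (the tangent space at (u, p) to the 4-dimensional manifold of oriented lines, parametrized as pairs of a unit direction vector and an orthogonal position vector). Then the alternating bilinear form Ω on E × E defined by Ω((v₁, w₁), (v₂, w₂)) = ⟪v₁, w₂⟫ − ⟪v₂, w₁⟫ restricts to a nondegenerate bilinear form on T: if (v, w) ∈ T satisfies Ω((v, w), (v', w')) = 0 for all (v', w') ∈ T, then v = 0 and w = 0. (The set of oriented straight lines in Euclidean 3-space carries a symplectic form ω = dP ∧ du.) -/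
open RealInnerProductSpace

noncomputable section

theorem symplectic_form_nondegenerate_on_tangent
    (u p : E) (hu : ‖u‖ = 1) (hup : ⟪u, p⟫ = 0)
    (v w : E) (hw : ⟪u, w⟫ = 0) (hvw : ⟪u, v⟫ + ⟪p, w⟫ = 0)
    (hdeg : ∀ v' w' : E, ⟪u, w'⟫ = 0 → ⟪u, v'⟫ + ⟪p, w'⟫ = 0 →
      ⟪v, w'⟫ - ⟪v', w⟫ = 0) :
    v = 0 ∧ w = 0 := by
  have hw0 : w = 0 := by
    have h := hdeg w 0 (by simp) (by simpa using hw)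
    have : ⟪w, w⟫ = 0 := by simpa using h
    exact inner_self_eq_zero.mp this
  have huv : ⟪u, v⟫ = 0 := by
    have : ⟪p, w⟫ = 0 := by simp [hw0]
    linarith [hvw]
  have hv0 : v = 0 := by
    set w' : E := v - ⟪u, v⟫ • u with hw'
    have h1 : ⟪u, w'⟫ = 0 := by
      simp [hw', inner_sub_right, real_inner_smul_right, real_inner_self_eq_norm_sq, hu, huv]
    have h2 : ⟪u, (-⟪p, w'⟫) • u⟫ + ⟪p, w'⟫ = 0 := by
      rw [real_inner_smul_right, real_inner_self_eq_norm_sq, hu]; ring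
    have h := hdeg ((-⟪p, w'⟫) • u) w' h1 h2
    have : ⟪v, w'⟫ = 0 := by simp [hw0] at h; simpa using h
    have : ⟪v, v⟫ = 0 := by
      simp [hw', inner_sub_right, real_inner_smul_right, huv] at this
      simpa using this
    exact inner_self_eq_zero.mp this
  exact ⟨hv0, hw0⟩
end
end
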